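/- Let P be a rendez-vous protocol with no leader and let N ∈ ℕ be such that C_i^(N) →* C_f^(N) and C_i^(N+1) →* C_f^(N+1). Then for every n ≥ N², we have C_i^(n) →* C_f^(n). (In other words, N² is a cut-off for P.) -/

import Mathlib

/-- Actions labelling edges of a rendez-vous protocol: request (`recv`, written `?a`)
or answer (`send`, written `!a`). -/
inductive RVAct (A : Type) : Type
  | send : A → RVAct A
  | recv : A → RVAct A

/-- A rendez-vous protocol with no leader: a finite set of states `Q`, a finite
alphabet `A`, initial and final states, and a set of edges. -/
structure RVNProtocol (Q A : Type) : Type where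
  qi : Q
  qf : Q
  E : Set (Q × RVAct A × Q)

namespace RVNProtocol

variable {Q A : Type} [DecidableEq Q] (P : RVNProtocol Q A)

/-- One rendez-vous step between configurations (multisets of states). -/
def Step (C C' : Multiset Q) : Prop :=
  ∃ (a : A) (q1 q2 q1' q2' : Q),
    (q1, RVAct.recv a, q2) ∈ P.E ∧ (q1', RVAct.send a, q2') ∈ P.E ∧
    0 < C.count q1 ∧ 0 < C.count q1' ∧ 2 ≤ C.count q1 + C.count q1' ∧
    C' = C - {q1, q1'} + {q2, q2'}

/-- Reachability: reflexive-transitive closure of `Step`. -/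
def Reach : Multiset Q → Multiset Q → Prop := Relation.ReflTransGen P.Step

/-- The initial configuration with `n` processes: `n` copies of `q_i`. -/
def Ci (n : ℕ) : Multiset Q := Multiset.replicate n P.qi

/-- The final configuration with `n` processes: `n` copies of `q_f`. -/
def Cf (n : ℕ) : Multiset Q := Multiset.replicate n P.qf

end RVNProtocol

/-!
Steps that preserve the number of processes can be performed inside any larger configuration,
so running a solution for `m` processes next to one for `n` processes solves `m + n`. Hence the
sizes `n` with `C_i^(n) →* C_f^(n)` form an additive submonoid of `ℕ`; it contains `N` and
`N + 1`, and every `n ≥ N²` is a sum of `N`s and `(N + 1)`s.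
-/

namespace Nat

theorem exists_eq_mul_add_mul_succ_of_sq_le {N n : ℕ} (hn : N ^ 2 ≤ n) :
    ∃ a b : ℕ, a * N + b * (N + 1) = n := by
  rcases N.eq_zero_or_pos with rfl | hN
  · exact ⟨0, n, by simp⟩
  -- `n = qN + r = (q - r)N + r(N + 1)`, and `r < N ≤ q`.
  have hr : n % N ≤ n / N :=
    (n.mod_lt hN).le.trans ((Nat.le_div_iff_mul_le hN).2 (by nlinarith))
  refine ⟨n / N - n % N, n % N, ?_⟩
  have hqr := n.div_add_mod N
  have hsub : (n / N - n % N) * N + n % N * N = n / N * N := by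
    rw [← Nat.add_mul, Nat.sub_add_cancel hr]
  nlinarith

theorem mem_closure_pair_succ_of_sq_le {N n : ℕ} (hn : N ^ 2 ≤ n) :
    n ∈ AddSubmonoid.closure {N, N + 1} := by
  obtain ⟨a, b, hab⟩ := exists_eq_mul_add_mul_succ_of_sq_le hn
  exact (AddSubmonoid.mem_closure_pair _ _ _).2 ⟨a, b, by simpa using hab⟩

end Nat

namespace RVNProtocol

variable {Q A : Type} [DecidableEq Q] (P : RVNProtocol Q A)

theorem card_le_of_step {C D : Multiset Q} (h : P.Step C D) : C.card ≤ D.card := by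
  obtain ⟨a, q1, q2, q1', q2', -, -, -, -, -, rfl⟩ := h
  calc C.card ≤ (C - {q1, q1'} + {q1, q1'}).card := Multiset.card_le_card le_tsub_add
    _ = (C - {q1, q1'} + {q2, q2'}).card := by simp

/-- `Step` also fires for a single process in a state `q` carrying both `?a` and `!a`, creating
a process; a size-preserving step is a genuine rendez-vous, so it can be performed in any
context. -/
theorem step_add_right {C D : Multiset Q} (h : P.Step C D) (hcard : C.card = D.card)
    (E : Multiset Q) : P.Step (C + E) (D + E) := by
  obtain ⟨a, q1, q2, q1', q2', he, he', h1, h1', h2, rfl⟩ := h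
  have hpair : ({q1, q1'} : Multiset Q) ≤ C := by
    refine tsub_add_cancel_iff_le.1 (Multiset.eq_of_le_of_card_le le_tsub_add ?_).symm
    simpa using hcard.ge
  refine ⟨a, q1, q2, q1', q2', he, he', ?_, ?_, ?_, ?_⟩
  · simp only [Multiset.count_add]; omega
  · simp only [Multiset.count_add]; omega
  · simp only [Multiset.count_add]; omega
  · rw [add_right_comm, tsub_add_eq_add_tsub hpair]

theorem card_le_of_reach {C D : Multiset Q} (h : P.Reach C D) : C.card ≤ D.card := by
  induction h with
  | refl => exact le_rfl
  | tail _ hstep ih => exact ih.trans (P.card_le_of_step hstep)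

theorem reach_add_right {C D : Multiset Q} (h : P.Reach C D) (hcard : C.card = D.card)
    (E : Multiset Q) : P.Reach (C + E) (D + E) := by
  induction h using Relation.ReflTransGen.head_induction_on with
  | refl => exact Relation.ReflTransGen.refl
  | head hstep hrest ih =>
    have h1 := P.card_le_of_step hstep
    have h2 := P.card_le_of_reach hrest
    exact .head (P.step_add_right hstep (by omega) E) (ih (by omega))

theorem reach_add {C D C' D' : Multiset Q} (h : P.Reach C D) (hcard : C.card = D.card)
    (h' : P.Reach C' D') (hcard' : C'.card = D'.card) : P.Reach (C + C') (D + D') := by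
  refine (P.reach_add_right h hcard C').trans ?_
  rw [add_comm D, add_comm D]
  exact P.reach_add_right h' hcard' D

def solvableSizes : AddSubmonoid ℕ where
  carrier := {n | P.Reach (P.Ci n) (P.Cf n)}
  zero_mem' := Relation.ReflTransGen.refl
  add_mem' {m n} hm hn := by
    simp only [Set.mem_ofPred_eq, Ci, Cf, Multiset.replicate_add] at hm hn ⊢
    exact P.reach_add hm (by simp) hn (by simp)

end RVNProtocol

theorem noleader_square_cutoff_general {Q A : Type} [DecidableEq Q]
    (P : RVNProtocol Q A) (N : ℕ)
    (hN : P.Reach (P.Ci N) (P.Cf N)) (hN1 : P.Reach (P.Ci (N + 1)) (P.Cf (N + 1))) :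
    ∀ n ≥ N ^ 2, P.Reach (P.Ci n) (P.Cf n) := by
  have hclosure : AddSubmonoid.closure {N, N + 1} ≤ P.solvableSizes :=
    AddSubmonoid.closure_le.2 (Set.insert_subset_iff.2 ⟨hN, Set.singleton_subset_iff.2 hN1⟩)
  exact fun n hn => hclosure (Nat.mem_closure_pair_succ_of_sq_le hn)

/-- If a rendez-vous protocol with no leader satisfies
`C_i^{(N)} →* C_f^{(N)}` and `C_i^{(N+1)} →* C_f^{(N+1)}`, then `N²` is a cut-off:
`C_i^{(n)} →* C_f^{(n)}` for every `n ≥ N²`. -/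
theorem noleader_square_cutoff {Q A : Type} [Fintype Q] [Fintype A] [DecidableEq Q]
    (P : RVNProtocol Q A) (N : ℕ)
    (hN : P.Reach (P.Ci N) (P.Cf N)) (hN1 : P.Reach (P.Ci (N + 1)) (P.Cf (N + 1))) :
    ∀ n ≥ N ^ 2, P.Reach (P.Ci n) (P.Cf n) :=
  noleader_square_cutoff_general P N hN hN1
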